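/- Inversion of permutations intertwines the block composition with the left composition: for permutations σ of {1,…,n} and ν of {1,…,m} and i ∈ {1,…,n}, one has (B_i(σ, ν))^{−1} = σ^{−1} ∘←_i ν^{−1}, where σ^{−1} ∘←_i ν^{−1} is the permutation of {1,…,n+m−1} obtained from Inc_{m−1}^{i}(σ^{−1}) by replacing the letter i by the word Inc_{i−1}^{0}(ν^{−1}). (This expresses that the map E_σ ↦ E_{σ^{−1}} is an isomorphism from the right associative operad to the left associative operad of permutations.) -/

import Mathlib

/-- Increment by `α` every letter strictly greater than `β`. -/
def Inc (α β : ℕ) (u : List ℕ) : List ℕ := u.map fun a => if β < a then a + α else a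

/-- Maximal letter of a word. -/
def maxLetter (v : List ℕ) : ℕ := v.foldr max 0

/-- A packed word whose letter set is exactly `{1, …, k}`. -/
def IsPackedOn (k : ℕ) (w : List ℕ) : Prop := w.toFinset = Finset.Icc 1 k

/-- A packed word. -/
def IsPacked (w : List ℕ) : Prop := ∃ k, IsPackedOn k w

/-- A permutation of `{1, …, n}` identified with the word `σ(1) ⋯ σ(n)`. -/
def IsPermWord (n : ℕ) (σ : List ℕ) : Prop :=
  σ.length = n ∧ σ.toFinset = Finset.Icc 1 n

/-- `σ` is the standardization of `w`: a permutation word of `{1, …, n}` with the same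
inversions as `w` (0-based indexing). -/
def IsStdOf (w σ : List ℕ) : Prop :=
  IsPermWord w.length σ ∧
    ∀ i j : ℕ, i < j → j < w.length →
      (w.getD j 0 < w.getD i 0 ↔ σ.getD j 0 < σ.getD i 0)

/-- The weakly increasing rearrangement (composition type) of a word. -/
def chi (w : List ℕ) : List ℕ := List.insertionSort (· ≤ ·) w

/-- Right composition `u ∘→_i v` of packed words (`i` is 1-based). -/
def rightComp (u : List ℕ) (i : ℕ) (v : List ℕ) : List ℕ :=
  Inc (maxLetter v - 1) (u.getD (i - 1) 0) (u.take (i - 1))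
    ++ Inc (u.getD (i - 1) 0 - 1) 0 v
    ++ Inc (maxLetter v - 1) (u.getD (i - 1) 0 - 1) (u.drop i)

/-- Left composition `u ∘←_i v` of packed words: replace in `Inc (m-1) i u` every
occurrence of the letter `i` by the word `Inc (i-1) 0 v`, where `m` is the maximal
letter of `v`. -/
def leftComp (u : List ℕ) (i : ℕ) (v : List ℕ) : List ℕ :=
  u.flatMap fun a =>
    if a = i then Inc (i - 1) 0 v else [if i < a then a + (maxLetter v - 1) else a]

/-- Block composition `B_i(α, β)` of permutation words (`i` is 1-based, `β` a permutation
of `{1, …, m}` with `m = β.length`). -/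
def blockComp (α : List ℕ) (i : ℕ) (β : List ℕ) : List ℕ :=
  Inc (β.length - 1) (α.getD (i - 1) 0) (α.take (i - 1))
    ++ Inc (α.getD (i - 1) 0 - 1) 0 β
    ++ Inc (β.length - 1) (α.getD (i - 1) 0 - 1) (α.drop i)

/-- The inverse of a permutation word. -/
def invWord (σ : List ℕ) : List ℕ :=
  (List.range σ.length).map fun p => σ.idxOf (p + 1) + 1

/-- The right action of a permutation word `σ` of `{1, …, n}` on a packed word with
letter set `{1, …, n}`: the `p`-th letter of `u · σ` is `σ⁻¹(u(p))`. -/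
def permAct (u σ : List ℕ) : List ℕ := u.map fun a => (invWord σ).getD (a - 1) 0

/-- The identity permutation word of `{1, …, m}`. -/
def idWord (m : ℕ) : List ℕ := (List.range m).map (· + 1)

/-- `First k u`: keep only the `k` leftmost occurrences of each letter of `u`. -/
def First (k : ℕ) (u : List ℕ) : List ℕ :=
  (List.range u.length).filterMap fun p =>
    if (u.take p).count (u.getD p 0) < k then some (u.getD p 0) else none

/-!
Write `k = σ(i)`. The word `B_i(σ, ν)` sends the positions outside the block `i, …, i+m-1`
through `σ`, shifted by `m - 1` past `i` on the position side and past `k` on the letter side,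
and sends the block onto the letters `k, …, k+m-1` through `ν`. Inverting exchanges positions
and letters, so the inverse is again a block composition, `B_k(σ⁻¹, ν⁻¹)`. Since `σ⁻¹` has
its letter `i` at position `k`, this is the left composition `σ⁻¹ ∘←_i ν⁻¹`.
-/

def incLetter (α β a : ℕ) : ℕ := if β < a then a + α else a

lemma incLetter_succ_sub_one (α β a : ℕ) :
    incLetter α (β + 1) a - 1 = incLetter α β (a - 1) := by
  unfold incLetter; split_ifs <;> omega

lemma incLetter_succ_succ (α β a : ℕ) :
    incLetter α (β + 1) (a + 1) = incLetter α β a + 1 := by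
  unfold incLetter; split_ifs <;> omega

lemma incLetter_zero_of_pos (α : ℕ) {a : ℕ} (ha : 0 < a) : incLetter α 0 a = a + α :=
  if_pos ha

lemma exists_incLetter_eq_or_add_eq {n m j p : ℕ} (hj : j < n) (hm : 0 < m)
    (hp : p < n + m - 1) :
    (∃ p' < n, p' ≠ j ∧ incLetter (m - 1) j p' = p) ∨ ∃ r < m, j + r = p := by
  unfold incLetter
  by_cases hpj : p < j
  · exact .inl ⟨p, by omega, by omega, if_neg (by omega)⟩
  by_cases hpm : p < j + m
  · exact .inr ⟨p - j, by omega, by omega⟩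
  · exact .inl ⟨p - (m - 1), by omega, by omega, by rw [if_pos (by omega)]; omega⟩

lemma getD_Inc (α β : ℕ) (u : List ℕ) (p : ℕ) :
    (Inc α β u).getD p 0 = incLetter α β (u.getD p 0) := by
  rw [← show incLetter α β 0 = 0 by simp [incLetter]]
  exact List.getD_map u 0 (incLetter α β)

lemma List.getD_take_of_lt {α : Type*} (l : List α) (d : α) {t p : ℕ} (h : p < t) :
    (l.take t).getD p d = l.getD p d := by
  simp [List.getD_eq_getElem?_getD, h]

lemma List.getD_drop {α : Type*} (l : List α) (d : α) (t p : ℕ) :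
    (l.drop t).getD p d = l.getD (t + p) d := by
  simp [List.getD_eq_getElem?_getD, List.getElem?_drop]

lemma maxLetter_eq_of_mem {l : List ℕ} {M : ℕ} (hle : ∀ a ∈ l, a ≤ M) (hM : M ∈ l) :
    maxLetter l = M :=
  le_antisymm (List.max_le_of_forall_le l M hle) (List.le_max_of_le hM le_rfl)

/-- `σ` and `σ'` are mutually inverse permutation words of `{1, …, n}`, read with 0-based
positions and 1-based letters. -/
structure AreInverse (n : ℕ) (σ σ' : List ℕ) : Prop where
  length_left : σ.length = n
  length_right : σ'.length = n
  getD_right_getD : ∀ p < n, σ'.getD (σ.getD p 0 - 1) 0 = p + 1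
  getD_left_getD : ∀ q < n, σ.getD (σ'.getD q 0 - 1) 0 = q + 1

namespace AreInverse

variable {n : ℕ} {σ σ' : List ℕ}

lemma symm (h : AreInverse n σ σ') : AreInverse n σ' σ :=
  ⟨h.2, h.1, h.4, h.3⟩

lemma getD_eq_of_getD_eq (h : AreInverse n σ σ') {j k : ℕ} (hj : j < n)
    (hk : σ.getD j 0 = k + 1) : σ'.getD k 0 = j + 1 := by
  simpa only [hk, Nat.add_sub_cancel] using h.getD_right_getD j hj

lemma one_le_getD_le (h : AreInverse n σ σ') {p : ℕ} (hp : p < n) :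
    1 ≤ σ.getD p 0 ∧ σ.getD p 0 ≤ n := by
  have hp' := h.getD_right_getD p hp
  have hlt : σ.getD p 0 - 1 < n := by
    by_contra! hge
    rw [List.getD_eq_default _ _ (by rw [h.length_right]; exact hge)] at hp'
    omega
  refine ⟨Nat.one_le_iff_ne_zero.2 fun h0 => ?_, by omega⟩
  have h1 := h.getD_left_getD 0 (by omega)
  rw [h0] at hp'
  rw [hp', Nat.add_sub_cancel, h0] at h1
  omega

lemma lt_of_getD_eq (h : AreInverse n σ σ') {j k : ℕ} (hj : j < n)
    (hk : σ.getD j 0 = k + 1) : k < n := by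
  have := (h.one_le_getD_le hj).2
  omega

lemma getD_injective (h : AreInverse n σ σ') {p p' : ℕ} (hp : p < n) (hp' : p' < n)
    (he : σ.getD p 0 = σ.getD p' 0) : p = p' := by
  have e := h.getD_right_getD p hp
  rwa [he, h.getD_right_getD p' hp', Nat.add_right_cancel_iff, eq_comm] at e

lemma nodup (h : AreInverse n σ σ') : σ.Nodup := by
  rw [List.nodup_iff_injective_getElem]
  rintro ⟨p, hp⟩ ⟨p', hp'⟩ he
  have hl := h.length_left
  refine Fin.ext (h.getD_injective (by omega) (by omega) ?_)
  rwa [List.getD_eq_getElem _ _ hp, List.getD_eq_getElem _ _ hp']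

lemma mem (h : AreInverse n σ σ') {a : ℕ} (h1 : 1 ≤ a) (h2 : a ≤ n) : a ∈ σ := by
  have e := h.getD_left_getD (a - 1) (by omega)
  rw [Nat.sub_add_cancel h1] at e
  have := (h.symm.one_le_getD_le (show a - 1 < n by omega)).2
  rw [← e, List.getD_eq_getElem _ _ (by rw [h.length_left]; omega)]
  exact List.getElem_mem _

lemma maxLetter_eq (h : AreInverse n σ σ') : maxLetter σ = n := by
  rcases Nat.eq_zero_or_pos n with rfl | hn
  · rw [List.eq_nil_of_length_eq_zero h.length_left]; rfl
  refine maxLetter_eq_of_mem (fun a ha => ?_) (h.mem hn le_rfl)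
  obtain ⟨p, hp, rfl⟩ := List.getElem_of_mem ha
  rw [← List.getD_eq_getElem _ 0 hp]
  exact (h.one_le_getD_le (h.length_left ▸ hp)).2

end AreInverse

lemma getD_invWord {σ : List ℕ} {q : ℕ} (hq : q < σ.length) :
    (invWord σ).getD q 0 = σ.idxOf (q + 1) + 1 := by
  simp [invWord, List.getD_eq_getElem?_getD, hq]

lemma invWord_eq_of_areInverse {N : ℕ} {τ ρ : List ℕ} (h : AreInverse N τ ρ) :
    invWord τ = ρ := by
  refine List.ext_getElem (by simp [invWord, h.length_left, h.length_right]) fun q hq _ => ?_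
  have hqN : q < N := by simpa [invWord, h.length_left] using hq
  have hidx : τ.idxOf (q + 1) < τ.length :=
    List.idxOf_lt_length_of_mem (h.mem (by omega) (by omega))
  have e := h.getD_right_getD _ (h.length_left ▸ hidx)
  rw [List.getD_eq_getElem _ _ hidx, List.getElem_idxOf, Nat.add_sub_cancel] at e
  rw [← List.getD_eq_getElem _ 0, ← List.getD_eq_getElem ρ 0,
    getD_invWord (h.length_left ▸ hqN), e]

namespace IsPermWord

variable {n : ℕ} {σ : List ℕ}

lemma nodup (h : IsPermWord n σ) : σ.Nodup := by
  refine Multiset.toFinset_card_eq_card_iff_nodup (m := (σ : Multiset ℕ)).1 ?_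
  change (σ.toFinset).card = σ.length
  rw [h.2, Nat.card_Icc, h.1, Nat.add_sub_cancel]

lemma mem_iff (h : IsPermWord n σ) {a : ℕ} : a ∈ σ ↔ 1 ≤ a ∧ a ≤ n := by
  rw [← List.mem_toFinset, h.2, Finset.mem_Icc]

lemma areInverse_invWord (h : IsPermWord n σ) : AreInverse n σ (invWord σ) where
  length_left := h.1
  length_right := by simp [invWord, h.1]
  getD_right_getD p hp := by
    have hp' : p < σ.length := h.1 ▸ hp
    have hmem := h.mem_iff.1 (σ.getElem_mem hp')
    rw [List.getD_eq_getElem _ _ hp', getD_invWord (by have := h.1; omega),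
      Nat.sub_add_cancel hmem.1, h.nodup.idxOf_getElem]
  getD_left_getD q hq := by
    have hmem : q + 1 ∈ σ := h.mem_iff.2 ⟨by omega, by omega⟩
    rw [getD_invWord (h.1 ▸ hq), Nat.add_sub_cancel,
      List.getD_eq_getElem _ _ (List.idxOf_lt_length_of_mem hmem), List.getElem_idxOf]

end IsPermWord

section blockComp

variable {σ ν : List ℕ} {j : ℕ}

lemma length_blockComp (hj : j < σ.length) :
    (blockComp σ (j + 1) ν).length = σ.length + ν.length - 1 := by
  simp only [blockComp, Inc, List.length_append, List.length_map, List.length_take,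
    List.length_drop]
  omega

lemma getD_blockComp_add (hj : j < σ.length) {r : ℕ} (hr : r < ν.length) :
    (blockComp σ (j + 1) ν).getD (j + r) 0 = incLetter (σ.getD j 0 - 1) 0 (ν.getD r 0) := by
  have hA : (Inc (ν.length - 1) (σ.getD j 0) (σ.take j)).length = j := by
    simp [Inc]; omega
  have hB : (Inc (σ.getD j 0 - 1) 0 ν).length = ν.length := by simp [Inc]
  rw [blockComp, Nat.add_sub_cancel,
    List.getD_append _ _ _ _ (by rw [List.length_append, hA, hB]; omega),
    List.getD_append_right _ _ _ _ (by omega), hA, Nat.add_sub_cancel_left, getD_Inc]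

lemma getD_blockComp_incLetter (hj : j < σ.length) {p : ℕ} (hpj : p ≠ j)
    (hne : σ.getD p 0 ≠ σ.getD j 0) (hν : ν ≠ []) :
    (blockComp σ (j + 1) ν).getD (incLetter (ν.length - 1) j p) 0
      = incLetter (ν.length - 1) (σ.getD j 0) (σ.getD p 0) := by
  have hA : (Inc (ν.length - 1) (σ.getD j 0) (σ.take j)).length = j := by
    simp [Inc]; omega
  have hB : (Inc (σ.getD j 0 - 1) 0 ν).length = ν.length := by simp [Inc]
  have hm := List.length_pos_iff.2 hν
  rw [blockComp, Nat.add_sub_cancel]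
  rcases Nat.lt_or_gt_of_ne hpj with hlt | hgt
  · rw [incLetter, if_neg (by omega),
      List.getD_append _ _ _ _ (by rw [List.length_append, hA]; omega),
      List.getD_append _ _ _ _ (by omega), getD_Inc, List.getD_take_of_lt _ _ hlt]
  · rw [incLetter, if_pos hgt,
      List.getD_append_right _ _ _ _ (by rw [List.length_append, hA, hB]; omega), getD_Inc,
      List.getD_drop, List.length_append, hA, hB,
      show j + 1 + (p + (ν.length - 1) - (j + ν.length)) = p by omega]
    simp only [incLetter]
    split_ifs <;> omega

end blockComp

namespace AreInverse

variable {n m j k : ℕ} {σ σ' ν ν' : List ℕ}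

lemma getD_blockComp_getD (hσ : AreInverse n σ σ') (hν : AreInverse m ν ν') (hj : j < n)
    (hk : σ.getD j 0 = k + 1) (hm : 0 < m) {p : ℕ} (hp : p < n + m - 1) :
    (blockComp σ' (k + 1) ν').getD ((blockComp σ (j + 1) ν).getD p 0 - 1) 0 = p + 1 := by
  have hjσ : j < σ.length := hσ.length_left ▸ hj
  have hkn : k < n := hσ.lt_of_getD_eq hj hk
  have hkσ' : k < σ'.length := hσ.length_right ▸ hkn
  have hσ'k : σ'.getD k 0 = j + 1 := hσ.getD_eq_of_getD_eq hj hk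
  have hνne : ν ≠ [] := List.ne_nil_of_length_pos (hν.length_left ▸ hm)
  have hν'ne : ν' ≠ [] := List.ne_nil_of_length_pos (hν.length_right ▸ hm)
  rcases exists_incLetter_eq_or_add_eq hj hm hp with ⟨p', hp', hp'j, rfl⟩ | ⟨r, hr, rfl⟩
  · obtain ⟨hs1, hsn⟩ := hσ.one_le_getD_le hp'
    have hne : σ.getD p' 0 ≠ σ.getD j 0 := fun he => hp'j (hσ.getD_injective hp' hj he)
    have hσ'p' := hσ.getD_right_getD p' hp'
    have e1 := getD_blockComp_incLetter hjσ hp'j hne hνne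
    have e2 := getD_blockComp_incLetter (ν := ν') (p := σ.getD p' 0 - 1) hkσ' (by omega)
      (by rw [hσ'p', hσ'k]; omega) hν'ne
    rw [hν.length_left] at e1
    rw [hν.length_right] at e2
    rw [e1, hk, incLetter_succ_sub_one, e2, hσ'p', hσ'k, incLetter_succ_succ]
  · obtain ⟨hs1, hsm⟩ := hν.one_le_getD_le hr
    rw [getD_blockComp_add hjσ (hν.length_left ▸ hr), hk, Nat.add_sub_cancel,
      incLetter_zero_of_pos _ hs1, show ν.getD r 0 + k - 1 = k + (ν.getD r 0 - 1) by omega,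
      getD_blockComp_add hkσ' (by rw [hν.length_right]; omega), hσ'k, Nat.add_sub_cancel,
      hν.getD_right_getD r hr, incLetter_zero_of_pos _ (by omega)]
    omega

lemma blockComp (hσ : AreInverse n σ σ') (hν : AreInverse m ν ν') (hj : j < n)
    (hk : σ.getD j 0 = k + 1) (hm : 0 < m) :
    AreInverse (n + m - 1) (blockComp σ (j + 1) ν) (blockComp σ' (k + 1) ν') := by
  have hkn : k < n := hσ.lt_of_getD_eq hj hk
  have hσ'k : σ'.getD k 0 = j + 1 := hσ.getD_eq_of_getD_eq hj hk
  refine ⟨?_, ?_, fun p hp => hσ.getD_blockComp_getD hν hj hk hm hp,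
    fun q hq => hσ.symm.getD_blockComp_getD hν.symm hkn hσ'k hm hq⟩
  · rw [length_blockComp (hσ.length_left ▸ hj), hσ.length_left, hν.length_left]
  · rw [length_blockComp (hσ.length_right ▸ hkn), hσ.length_right, hν.length_right]

end AreInverse

lemma flatMap_ite_eq_Inc_of_notMem {l : List ℕ} {i α : ℕ} (w : List ℕ) (hl : i ∉ l) :
    l.flatMap (fun a => if a = i then w else [if i < a then a + α else a]) = Inc α i l := by
  induction l with
  | nil => rfl
  | cons b t ih =>
    rw [List.mem_cons, not_or] at hl
    rw [List.flatMap_cons, if_neg (Ne.symm hl.1), ih hl.2]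
    rfl

lemma Inc_sub_one_eq_of_notMem {l : List ℕ} {i α : ℕ} (hl : i ∉ l) :
    Inc α (i - 1) l = Inc α i l :=
  List.map_congr_left fun a ha => by
    have : a ≠ i := fun h => hl (h ▸ ha)
    by_cases h : i < a
    · rw [if_pos h, if_pos (by omega)]
    · rw [if_neg h, if_neg (by omega)]

lemma leftComp_eq_blockComp {u v : List ℕ} {i k : ℕ} (hu : u.Nodup) (hk : k < u.length)
    (hki : u.getD k 0 = i) (hv : maxLetter v = v.length) :
    leftComp u i v = blockComp u (k + 1) v := by
  have hsplit : u = u.take k ++ i :: u.drop (k + 1) := by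
    rw [← hki, List.getD_eq_getElem _ _ hk, ← List.drop_eq_getElem_cons hk,
      List.take_append_drop]
  have hnd := hu
  rw [hsplit, List.nodup_append, List.nodup_cons] at hnd
  have hi_take : i ∉ u.take k := fun h => hnd.2.2 i h i List.mem_cons_self rfl
  have hi_drop : i ∉ u.drop (k + 1) := hnd.2.1.1
  rw [leftComp, hv]
  conv_lhs => rw [hsplit]
  rw [List.flatMap_append, List.flatMap_cons, if_pos rfl,
    flatMap_ite_eq_Inc_of_notMem _ hi_take, flatMap_ite_eq_Inc_of_notMem _ hi_drop, blockComp,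
    Nat.add_sub_cancel, hki, Inc_sub_one_eq_of_notMem hi_drop, List.append_assoc]

/-- Inversion of permutations intertwines the block composition with the left
composition: `(B_i(σ, ν))⁻¹ = σ⁻¹ ∘←_i ν⁻¹`. -/
theorem invWord_blockComp (n m i : ℕ) (σ ν : List ℕ)
    (hσ : IsPermWord n σ) (hν : IsPermWord m ν)
    (hi : i ∈ Finset.Icc 1 n) (hm : 1 ≤ m) :
    invWord (blockComp σ i ν) = leftComp (invWord σ) i (invWord ν) := by
  obtain ⟨hi1, hin⟩ := Finset.mem_Icc.1 hi
  obtain ⟨j, rfl⟩ := Nat.exists_eq_add_of_le' hi1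
  have hσ' := hσ.areInverse_invWord
  have hν' := hν.areInverse_invWord
  obtain ⟨k, hk⟩ := Nat.exists_eq_add_of_le' (hσ'.one_le_getD_le hin).1
  have hkn : k < n := hσ'.lt_of_getD_eq hin hk
  calc invWord (blockComp σ (j + 1) ν)
      = blockComp (invWord σ) (k + 1) (invWord ν) :=
        invWord_eq_of_areInverse (hσ'.blockComp hν' hin hk hm)
    _ = leftComp (invWord σ) (j + 1) (invWord ν) :=
        (leftComp_eq_blockComp hσ'.symm.nodup (hσ'.length_right ▸ hkn)
          (hσ'.getD_eq_of_getD_eq hin hk)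
          (by rw [hν'.symm.maxLetter_eq, hν'.length_right])).symm
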